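/- arXiv:math/0408272 — 2 statements merged into one kernel-verified Lean document; each statement's English description precedes it below -/
import Mathlib

section
/- For natural numbers m and n with 2 ≤ m ≤ n, the alternating sum ∑_{s=0}^{⌊m/2⌋} (−1)^s · C(n,s) · C(n+m−2−2s, m−2s) equals C(n,m) − C(n,m−1). -/
/-!
Compare coefficients of `X ^ m` in the power-series identity
`(1 - X²)ⁿ · (1 - X)⁻⁽ⁿ⁻¹⁾ = (1 + X)ⁿ · (1 - X)`.
On the left, `(1 - X²)ⁿ` contributes `(-1)ˢ C(n, s) X²ˢ` and the coefficient of `X ^ (m - 2s)` in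
`(1 - X)⁻⁽ⁿ⁻¹⁾` is `C(n - 2 + m - 2s, m - 2s)`; on the right one reads off `C(n, m) - C(n, m - 1)`.
-/

open Finset PowerSeries

namespace PowerSeries

variable {R : Type*} [CommRing R]

theorem coeff_one_add_X_pow (n k : ℕ) :
    coeff k ((1 + X : R⟦X⟧) ^ n) = (n.choose k : R) := by
  rw [← Polynomial.coeff_one_add_X_pow R n k, ← Polynomial.coeff_coe]
  simp only [Polynomial.coe_pow, Polynomial.coe_add, Polynomial.coe_one, Polynomial.coe_X]

theorem coeff_one_add_X_pow_mul_one_sub_X {m : ℕ} (hm : 1 ≤ m) (n : ℕ) :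
    coeff m ((1 + X : R⟦X⟧) ^ n * (1 - X)) = (n.choose m : R) - (n.choose (m - 1) : R) := by
  obtain ⟨k, rfl⟩ : ∃ k, m = k + 1 := ⟨m - 1, by omega⟩
  rw [mul_sub, mul_one, map_sub, coeff_succ_mul_X, coeff_one_add_X_pow, coeff_one_add_X_pow,
    Nat.add_sub_cancel]

theorem one_sub_X_sq_pow_eq_sum (n : ℕ) :
    (1 - X ^ 2 : R⟦X⟧) ^ n
      = ∑ s ∈ range (n + 1), C ((-1) ^ s * (n.choose s : R)) * X ^ (2 * s) := by
  rw [sub_eq_neg_add, add_pow]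
  refine sum_congr rfl fun s _ => ?_
  rw [one_pow, mul_one, neg_pow, ← pow_mul, map_mul, map_pow, map_neg, map_one, map_natCast]
  ring

theorem coeff_one_sub_X_sq_pow_mul (n m : ℕ) (f : R⟦X⟧) :
    coeff m ((1 - X ^ 2) ^ n * f)
      = ∑ s ∈ range (m / 2 + 1), (-1) ^ s * (n.choose s : R) * coeff (m - 2 * s) f := by
  simp_rw [one_sub_X_sq_pow_eq_sum, sum_mul, map_sum, mul_assoc, coeff_C_mul, coeff_X_pow_mul',
    mul_ite, mul_zero, ← sum_filter, ← mul_assoc]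
  have hfilter : (range (n + 1)).filter (fun s => 2 * s ≤ m)
      = (range (m / 2 + 1)).filter (fun s => s ≤ n) := by
    ext s
    simp only [mem_filter, mem_range]
    omega
  rw [hfilter, sum_filter_of_ne]
  intro s _ hs
  by_contra hsn
  exact hs (by rw [Nat.choose_eq_zero_of_lt (not_le.mp hsn)]; simp)

theorem one_sub_X_sq_pow_mul_invOneSubPow (d : ℕ) :
    (1 - X ^ 2 : R⟦X⟧) ^ (d + 1) * (invOneSubPow R d).val = (1 + X) ^ (d + 1) * (1 - X) := by
  have hinv : (1 - X : R⟦X⟧) ^ d * (invOneSubPow R d).val = 1 := by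
    rw [← invOneSubPow_inv_eq_one_sub_pow]
    exact (invOneSubPow R d).inv_val
  calc (1 - X ^ 2 : R⟦X⟧) ^ (d + 1) * (invOneSubPow R d).val
      = (1 + X) ^ (d + 1) * (1 - X) * ((1 - X) ^ d * (invOneSubPow R d).val) := by
        rw [show (1 - X ^ 2 : R⟦X⟧) = (1 + X) * (1 - X) by ring, mul_pow, pow_succ (1 - X)]
        ring
    _ = (1 + X) ^ (d + 1) * (1 - X) := by rw [hinv, mul_one]

end PowerSeries

/-- I_{m,n}(n) = C(n,m) − C(n,m−1): fully resonant case. -/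
theorem alternating_sum_full_resonance (m n : ℕ) (hm : 2 ≤ m) (hmn : m ≤ n) :
    ∑ s ∈ Finset.range (m / 2 + 1),
        (-1 : ℤ) ^ s * (Nat.choose n s : ℤ) * (Nat.choose (n + m - 2 - 2 * s) (m - 2 * s) : ℤ)
      = (Nat.choose n m : ℤ) - (Nat.choose n (m - 1) : ℤ) := by
  obtain ⟨d, rfl⟩ : ∃ d, n = d + 2 := ⟨n - 2, by omega⟩
  have hcoeff := congrArg (coeff m) (one_sub_X_sq_pow_mul_invOneSubPow (R := ℤ) (d + 1))
  rw [coeff_one_sub_X_sq_pow_mul, coeff_one_add_X_pow_mul_one_sub_X (by omega)] at hcoeff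
  rw [← hcoeff]
  refine sum_congr rfl fun s hs => ?_
  have h2s : 2 * s ≤ m := by
    rw [mem_range] at hs
    omega
  rw [invOneSubPow_val_succ_eq_mk_add_choose, coeff_mk, Nat.choose_symm_add,
    show d + 2 + m - 2 - 2 * s = d + (m - 2 * s) by omega]
end

section
/- (Pfaff–Saalschütz) Let j be a natural number and let a, b, c be real numbers such that (c)_j ≠ 0 and (1+a+b−c−j)_k ≠ 0 for all 0 ≤ k ≤ j. Then ∑_{k=0}^{j} [(a)_k (b)_k (−j)_k] / [(c)_k (1+a+b−c−j)_k · k!] = (c−a)_j (c−b)_j / [(c)_j (c−a−b)_j], provided also (c−a−b)_j ≠ 0. -/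
/-!
Write `t n k` for the `k`-th term of the sum with parameter `n`, and
`ρ n = (c - a + n) (c - b + n) / ((c + n) (c - a - b + n))`, the ratio of consecutive values of the
right-hand side. The sum satisfies the same recurrence: Zeilberger's certificate
`G n k = -k (k + c - 1) / ((c + n) (n + 1)) · t (n + 1) k` gives
`t (n + 1) k = ρ n · t n k + G n (k + 1) - G n k` for `k ≤ n` (comparing term ratios reduces this to a
rational identity), while `G n 0 = 0` and `G n (n + 1) = -t (n + 1) (n + 1)` dispose of the ends.
-/

/-- Rising factorial (Pochhammer symbol) on ℝ. -/
def poch (x : ℝ) : ℕ → ℝ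
  | 0 => 1
  | k + 1 => poch x k * (x + k)

open Polynomial Finset Nat

theorem poch_eq_ascPochhammer_eval (x : ℝ) (k : ℕ) : poch x k = (ascPochhammer ℝ k).eval x := by
  induction k with
  | zero => simp [poch]
  | succ k ih => rw [poch, ih, ascPochhammer_succ_eval]

section CommSemiring

variable {S : Type*} [CommSemiring S]

theorem ascPochhammer_eval_succ_left (x : S) (k : ℕ) :
    (ascPochhammer S (k + 1)).eval x = x * (ascPochhammer S k).eval (x + 1) := by
  simp [ascPochhammer_succ_left, eval_comp]

theorem ascPochhammer_eval_ne_zero_of_le {x : S} {m n : ℕ}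
    (h : (ascPochhammer S n).eval x ≠ 0) (hmn : m ≤ n) : (ascPochhammer S m).eval x ≠ 0 := by
  obtain ⟨l, rfl⟩ := Nat.exists_eq_add_of_le hmn
  rw [← ascPochhammer_mul, eval_mul] at h
  exact left_ne_zero_of_mul h

theorem add_natCast_ne_zero_of_ascPochhammer_eval_ne_zero {x : S} {n k : ℕ}
    (h : (ascPochhammer S n).eval x ≠ 0) (hk : k < n) : x + k ≠ 0 := fun h0 =>
  ascPochhammer_eval_ne_zero_of_le h hk (by rw [ascPochhammer_succ_eval, h0, mul_zero])

end CommSemiring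

section Field

variable {K : Type*} [Field K]

theorem ascPochhammer_eval_add_one {x : K} (hx : x ≠ 0) (k : ℕ) :
    (ascPochhammer K k).eval (x + 1) = (ascPochhammer K k).eval x * (x + k) / x := by
  rw [← ascPochhammer_succ_eval, ascPochhammer_eval_succ_left]
  field_simp

noncomputable def saalschuetzTerm (a b c : K) (n k : ℕ) : K :=
  (ascPochhammer K k).eval a * (ascPochhammer K k).eval b * (ascPochhammer K k).eval (-(n : K)) /
    ((ascPochhammer K k).eval c * (ascPochhammer K k).eval (1 + a + b - c - n) * k !)

theorem saalschuetzTerm_succ (a b c : K) (n k : ℕ) :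
    saalschuetzTerm a b c n (k + 1) = saalschuetzTerm a b c n k *
      ((a + k) * (b + k) * (-n + k) / ((c + k) * (1 + a + b - c - n + k) * (k + 1))) := by
  simp only [saalschuetzTerm, ascPochhammer_succ_eval, factorial_succ, cast_mul, cast_succ,
    div_eq_mul_inv, mul_inv]
  ring

variable [CharZero K]

theorem saalschuetzTerm_eq_saalschuetzTerm_succ_mul (a b c : K) {n : ℕ}
    (he : a + b - c - n ≠ 0) (k : ℕ) :
    saalschuetzTerm a b c n k = saalschuetzTerm a b c (n + 1) k *
      ((-(n + 1) + k) / -(n + 1) * ((a + b - c - n) / (a + b - c - n + k))) := by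
  have hn : -((n : K) + 1) ≠ 0 := neg_ne_zero.2 n.cast_add_one_ne_zero
  have h₁ : -(n : K) = -(n + 1) + 1 := by ring
  have h₂ : 1 + a + b - c - n = (a + b - c - n) + 1 := by ring
  have h₃ : 1 + a + b - c - (n + 1) = a + b - c - n := by ring
  simp only [saalschuetzTerm, cast_add_one, h₁, h₂, h₃, ascPochhammer_eval_add_one hn,
    ascPochhammer_eval_add_one he, div_eq_mul_inv, mul_inv, inv_inv]
  ring

noncomputable def saalschuetzCert (a b c : K) (n k : ℕ) : K :=
  -(k * (k + c - 1)) / ((c + n) * (n + 1)) * saalschuetzTerm a b c (n + 1) k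

theorem saalschuetzTerm_succ_eq_mul_add_sub {a b c : K} {n k : ℕ} (hcn : c + n ≠ 0)
    (he : a + b - c - n ≠ 0) (hck : c + k ≠ 0) (hek : a + b - c - n + k ≠ 0) :
    saalschuetzTerm a b c (n + 1) k =
      (c - a + n) * (c - b + n) / ((c + n) * (c - a - b + n)) * saalschuetzTerm a b c n k +
        (saalschuetzCert a b c n (k + 1) - saalschuetzCert a b c n k) := by
  have hn : (n : K) + 1 ≠ 0 := n.cast_add_one_ne_zero
  have hk : (k : K) + 1 ≠ 0 := k.cast_add_one_ne_zero
  have he' : c - a - b + n ≠ 0 := fun h => he (by linear_combination -h)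
  have hek' : 1 + a + b - c - (n + 1) + k ≠ 0 := fun h => hek (by linear_combination h)
  rw [saalschuetzCert, saalschuetzCert, saalschuetzTerm_succ,
    saalschuetzTerm_eq_saalschuetzTerm_succ_mul a b c he]
  push_cast
  field_simp
  ring

theorem saalschuetzCert_zero (a b c : K) (n : ℕ) : saalschuetzCert a b c n 0 = 0 := by
  simp [saalschuetzCert]

theorem saalschuetzCert_succ_self {a b c : K} {n : ℕ} (hcn : c + n ≠ 0) :
    saalschuetzCert a b c n (n + 1) = -saalschuetzTerm a b c (n + 1) (n + 1) := by
  have hn : (n : K) + 1 ≠ 0 := n.cast_add_one_ne_zero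
  rw [saalschuetzCert]
  push_cast
  field_simp
  ring

theorem sum_saalschuetzTerm_succ {a b c : K} {n : ℕ}
    (hc : (ascPochhammer K (n + 1)).eval c ≠ 0)
    (he : (ascPochhammer K (n + 1)).eval (a + b - c - n) ≠ 0) :
    ∑ k ∈ range (n + 2), saalschuetzTerm a b c (n + 1) k =
      (c - a + n) * (c - b + n) / ((c + n) * (c - a - b + n)) *
        ∑ k ∈ range (n + 1), saalschuetzTerm a b c n k := by
  have hcn : c + n ≠ 0 := add_natCast_ne_zero_of_ascPochhammer_eval_ne_zero hc n.lt_succ_self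
  have he₀ : a + b - c - n ≠ 0 := by
    simpa using add_natCast_ne_zero_of_ascPochhammer_eval_ne_zero he n.succ_pos
  rw [sum_range_succ, sum_congr rfl fun k hk => saalschuetzTerm_succ_eq_mul_add_sub hcn he₀
      (add_natCast_ne_zero_of_ascPochhammer_eval_ne_zero hc (mem_range.1 hk))
      (add_natCast_ne_zero_of_ascPochhammer_eval_ne_zero he (mem_range.1 hk)),
    sum_add_distrib, ← mul_sum, sum_range_sub,
    saalschuetzCert_zero, saalschuetzCert_succ_self hcn]
  ring

theorem sum_saalschuetzTerm (a b c : K) (n : ℕ) (hc : (ascPochhammer K n).eval c ≠ 0)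
    (hd : (ascPochhammer K n).eval (1 + a + b - c - n) ≠ 0) :
    ∑ k ∈ range (n + 1), saalschuetzTerm a b c n k =
      (ascPochhammer K n).eval (c - a) * (ascPochhammer K n).eval (c - b) /
        ((ascPochhammer K n).eval c * (ascPochhammer K n).eval (c - a - b)) := by
  induction n with
  | zero => simp [saalschuetzTerm]
  | succ n ih =>
    have he : (ascPochhammer K (n + 1)).eval (a + b - c - n) ≠ 0 := by
      rwa [cast_add_one, show 1 + a + b - c - (n + 1) = a + b - c - n by ring] at hd
    have hd' : (ascPochhammer K n).eval (1 + a + b - c - n) ≠ 0 := by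
      rw [ascPochhammer_eval_succ_left] at he
      rw [show 1 + a + b - c - n = a + b - c - n + 1 by ring]
      exact right_ne_zero_of_mul he
    rw [sum_saalschuetzTerm_succ hc he, ih (ascPochhammer_eval_ne_zero_of_le hc n.le_succ) hd']
    simp only [ascPochhammer_succ_eval, div_eq_mul_inv, mul_inv]
    ring

end Field

theorem pfaff_saalschuetz_general (j : ℕ) (a b c : ℝ)
    (hc : poch c j ≠ 0)
    (hd : ∀ k ≤ j, poch (1 + a + b - c - (j : ℝ)) k ≠ 0) :
    ∑ k ∈ Finset.range (j + 1),
        poch a k * poch b k * poch (-(j : ℝ)) k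
          / (poch c k * poch (1 + a + b - c - (j : ℝ)) k * (Nat.factorial k : ℝ))
      = poch (c - a) j * poch (c - b) j / (poch c j * poch (c - a - b) j) := by
  simp only [poch_eq_ascPochhammer_eval] at hc hd ⊢
  exact sum_saalschuetzTerm a b c j hc (hd j le_rfl)

/-- Pfaff–Saalschütz theorem for the terminating Saalschützian ₃F₂ at 1. -/
theorem pfaff_saalschuetz (j : ℕ) (a b c : ℝ)
    (hc : poch c j ≠ 0)
    (hd : ∀ k ≤ j, poch (1 + a + b - c - (j : ℝ)) k ≠ 0)
    (hcab : poch (c - a - b) j ≠ 0) :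
    ∑ k ∈ Finset.range (j + 1),
        poch a k * poch b k * poch (-(j : ℝ)) k
          / (poch c k * poch (1 + a + b - c - (j : ℝ)) k * (Nat.factorial k : ℝ))
      = poch (c - a) j * poch (c - b) j / (poch c j * poch (c - a - b) j) :=
  pfaff_saalschuetz_general j a b c hc hd
end
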